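/- For every LR-string S distinct from ε, among all generalized strings S' with |S'| < |S| and r(S') < r(S), the one maximizing r(S') is P_L(S); and among all S' with |S'| < |S| and r(S') > r(S), the one minimizing r(S') is P_R(S). -/

import Mathlib

open List

/-- `r`-value of an LR-string (`true` = R, `false` = L):
`r(ε) = 1`, `r(SL) = r(S) - 2^(-|SL|)`, `r(SR) = r(S) + 2^(-|SR|)`. -/
def rval (S : List Bool) : ℚ :=
  1 + ∑ i ∈ Finset.range S.length,
      (if S.getD i false then ((2:ℚ)^(i+1))⁻¹ else -((2:ℚ)^(i+1))⁻¹)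

/-- Generalized strings: LR-strings plus the formal symbols `R⁻¹ = inv true`
and `L⁻¹ = inv false`. -/
inductive Gen where
  | inv : Bool → Gen
  | str : List Bool → Gen
deriving DecidableEq

/-- Left parent: `P_L(ε) = R⁻¹`, `P_L(SL) = P_L(S)`, `P_L(SR) = S`. -/
def PL (S : List Bool) : Gen :=
  match S.reverse.dropWhile (· = false) with
  | [] => Gen.inv true
  | _ :: t => Gen.str t.reverse

/-- Right parent: `P_R(ε) = L⁻¹`, `P_R(SL) = S`, `P_R(SR) = P_R(S)`. -/
def PR (S : List Bool) : Gen :=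
  match S.reverse.dropWhile (· = true) with
  | [] => Gen.inv false
  | _ :: t => Gen.str t.reverse

/-- Extension of `r` to generalized strings: `r(R⁻¹) = 0`, `r(L⁻¹) = 2`. -/
def rg : Gen → ℚ
  | Gen.inv true => 0
  | Gen.inv false => 2
  | Gen.str S => rval S

/-- Length of a generalized string; the formal symbols have length `-1`. -/
def glen : Gen → ℤ
  | Gen.inv _ => -1
  | Gen.str S => S.length

/-- Position function: `N(ε) = 0`, `N(SL) = 2N(S)+1`, `N(SR) = 2N(S)+2`. -/
def posN (S : List Bool) : ℕ :=
  ∑ i ∈ Finset.range S.length, (if S.getD i false then 2 else 1) * 2^(S.length - 1 - i)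

/-- The alternating-block string `S(k₀,…,k_m) = R^{k₀} L^{k₁} R^{k₂} ⋯`. -/
def blockStr (ks : List ℕ) : List Bool :=
  (((List.range ks.length).zip ks).map (fun p => List.replicate p.2 (decide (p.1 % 2 = 0)))).flatten

/-- Continued fraction `[q₀,…,q_m]`. -/
def cf : List ℚ → ℚ
  | [] => 0
  | [q] => q
  | q :: qs => q + (cf qs)⁻¹

/-- Admissible continued-fraction index sequences: `[q₀]` with `q₀ ≥ 1`, or
`[q₀,…,q_m]` with `m ≥ 1`, intermediate `qᵢ ≥ 1`, and `q_m ≥ 2`. -/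
def CFAdmissible (qs : List ℕ) : Prop :=
  qs ≠ [] ∧ (qs.length = 1 → 1 ≤ qs.getD 0 0) ∧
    (∀ i, 1 ≤ i → i + 1 < qs.length → 1 ≤ qs.getD i 0) ∧
    (2 ≤ qs.length → 2 ≤ qs.getLastD 0)

/-- The map `f([q₀,…,q_m]) = S(q₀,…,q_{m-1},q_m - 1)`. -/
def cfToStr (qs : List ℕ) : List Bool :=
  blockStr (qs.dropLast ++ [qs.getLastD 0 - 1])

/-! Both parents lie at distance exactly `2^(-|S|)` from `r(S)`: `S` is `P_L(S) R L^k`, the `R` adds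
`2^(-|P_L(S)|-1)` and the `L`s subtract all of it except `2^(-|S|)`; dually for `P_R(S)`.
On the other hand `r(S)` and the `r`-value of every generalized string of length at most `|S|`
lie in `2^(-|S|) ℤ`, so no shorter generalized string lies strictly between `r(S)` and a parent. -/

lemma rval_append_singleton (S : List Bool) (b : Bool) :
    rval (S ++ [b]) =
      rval S + if b then ((2:ℚ) ^ (S.length + 1))⁻¹ else -((2:ℚ) ^ (S.length + 1))⁻¹ := by
  simp only [rval, List.length_append, List.length_singleton, Finset.sum_range_succ]
  rw [Finset.sum_congr rfl fun i hi => by rw [List.getD_append _ _ _ _ (Finset.mem_range.mp hi)]]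
  simp [add_assoc]

lemma PL_append_false (S : List Bool) : PL (S ++ [false]) = PL S := by
  simp [PL]

lemma PL_append_true (S : List Bool) : PL (S ++ [true]) = Gen.str S := by
  simp [PL]

lemma PR_append_true (S : List Bool) : PR (S ++ [true]) = PR S := by
  simp [PR]

lemma PR_append_false (S : List Bool) : PR (S ++ [false]) = Gen.str S := by
  simp [PR]

lemma glen_PL_lt (S : List Bool) : glen (PL S) < S.length := by
  induction S using List.reverseRecOn with
  | nil => simp [PL, glen]
  | append_singleton S b ih =>
    cases b
    · rw [PL_append_false]; push_cast [List.length_append]; omega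
    · simp [PL_append_true, glen]

lemma glen_PR_lt (S : List Bool) : glen (PR S) < S.length := by
  induction S using List.reverseRecOn with
  | nil => simp [PR, glen]
  | append_singleton S b ih =>
    cases b
    · simp [PR_append_false, glen]
    · rw [PR_append_true]; push_cast [List.length_append]; omega

lemma rg_PL (S : List Bool) : rg (PL S) = rval S - ((2:ℚ) ^ S.length)⁻¹ := by
  induction S using List.reverseRecOn with
  | nil => simp [PL, rg, rval]
  | append_singleton S b ih =>
    cases b
    · rw [PL_append_false, ih, rval_append_singleton]
      simp only [Bool.false_eq_true, if_false, List.length_append, List.length_singleton, pow_succ]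
      ring
    · simp [PL_append_true, rg, rval_append_singleton]

lemma rg_PR (S : List Bool) : rg (PR S) = rval S + ((2:ℚ) ^ S.length)⁻¹ := by
  induction S using List.reverseRecOn with
  | nil => norm_num [PR, rg, rval]
  | append_singleton S b ih =>
    cases b
    · simp [PR_append_false, rg, rval_append_singleton]
    · rw [PR_append_true, ih, rval_append_singleton]
      simp only [if_true, List.length_append, List.length_singleton, pow_succ]
      ring

lemma exists_rval_eq_intCast_mul (S : List Bool) :
    ∃ a : ℤ, rval S = a * ((2:ℚ) ^ S.length)⁻¹ := by
  induction S using List.reverseRecOn with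
  | nil => exact ⟨1, by simp [rval]⟩
  | append_singleton S b ih =>
    obtain ⟨a, ha⟩ := ih
    refine ⟨2 * a + if b then 1 else -1, ?_⟩
    rw [rval_append_singleton, ha]
    cases b <;> simp [pow_succ] <;> ring

lemma exists_rg_eq_intCast_mul {T : Gen} {n : ℕ} (hT : glen T ≤ n) :
    ∃ a : ℤ, rg T = a * ((2:ℚ) ^ n)⁻¹ := by
  rcases T with (_ | _) | U
  · exact ⟨2 ^ (n + 1), by simp [rg, pow_succ, mul_right_comm _ (2 : ℚ)]⟩
  · exact ⟨0, by simp [rg]⟩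
  · obtain ⟨a, ha⟩ := exists_rval_eq_intCast_mul U
    obtain ⟨k, rfl⟩ := Nat.exists_eq_add_of_le (show U.length ≤ n by simpa [glen] using hT)
    refine ⟨a * 2 ^ k, ?_⟩
    rw [rg, ha, pow_add]
    push_cast
    field_simp

lemma intCast_mul_add_le {K : Type*} [Field K] [LinearOrder K] [IsStrictOrderedRing K] {d : K}
    (hd : 0 < d) {a c : ℤ} (h : a * d < c * d) : a * d + d ≤ c * d := by
  have hac : a + 1 ≤ c := Int.cast_lt.mp (lt_of_mul_lt_mul_right h hd.le)
  have : ((a : K) + 1) * d ≤ c * d := mul_le_mul_of_nonneg_right (by exact_mod_cast hac) hd.le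
  linarith

lemma rg_le_of_lt_rval {T : Gen} {S : List Bool} (hT : glen T ≤ S.length)
    (h : rg T < rval S) :
    rg T ≤ rval S - ((2:ℚ) ^ S.length)⁻¹ := by
  obtain ⟨a, ha⟩ := exists_rg_eq_intCast_mul hT
  obtain ⟨c, hc⟩ := exists_rval_eq_intCast_mul S
  rw [ha, hc] at h ⊢
  linarith [intCast_mul_add_le (by positivity) h]

lemma rval_add_le_of_lt_rg {T : Gen} {S : List Bool} (hT : glen T ≤ S.length)
    (h : rval S < rg T) :
    rval S + ((2:ℚ) ^ S.length)⁻¹ ≤ rg T := by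
  obtain ⟨a, ha⟩ := exists_rg_eq_intCast_mul hT
  obtain ⟨c, hc⟩ := exists_rval_eq_intCast_mul S
  rw [ha, hc] at h ⊢
  exact intCast_mul_add_le (by positivity) h

theorem stmt7_general (S : List Bool) :
    (glen (PL S) < (S.length : ℤ) ∧ rg (PL S) < rval S ∧
      ∀ T : Gen, glen T < (S.length : ℤ) → rg T < rval S → rg T ≤ rg (PL S)) ∧
    (glen (PR S) < (S.length : ℤ) ∧ rval S < rg (PR S) ∧
      ∀ T : Gen, glen T < (S.length : ℤ) → rval S < rg T → rg (PR S) ≤ rg T) := by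
  have hpos : (0 : ℚ) < ((2:ℚ) ^ S.length)⁻¹ := by positivity
  rw [rg_PL, rg_PR]
  exact ⟨⟨glen_PL_lt S, by linarith, fun T hT h => rg_le_of_lt_rval hT.le h⟩,
    ⟨glen_PR_lt S, by linarith, fun T hT h => rval_add_le_of_lt_rg hT.le h⟩⟩

/-- Among generalized strings `S'` with `|S'| < |S|` and `r(S') < r(S)`, the one
maximizing `r(S')` is `P_L(S)`; dually, among those with `r(S') > r(S)`, the one
minimizing `r(S')` is `P_R(S)`. -/
theorem stmt7 (S : List Bool) (hS : S ≠ []) :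
    (glen (PL S) < (S.length : ℤ) ∧ rg (PL S) < rval S ∧
      ∀ T : Gen, glen T < (S.length : ℤ) → rg T < rval S → rg T ≤ rg (PL S)) ∧
    (glen (PR S) < (S.length : ℤ) ∧ rval S < rg (PR S) ∧
      ∀ T : Gen, glen T < (S.length : ℤ) → rval S < rg T → rg (PR S) ≤ rg T) :=
  stmt7_general S
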